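/- Let H be a Hilbert space, A, Λ bounded operators with AΛ = I − K where K is compact and ‖Kf‖ < ‖f‖ for all nonzero f. Then for every f ∈ H, f = Σ_{m=0}^∞ K^m (AΛ f), with convergence in H. -/

import Mathlib

/-!
Since `‖K x‖ < ‖x‖` for `x ≠ 0`, the norms along an orbit `Kⁿ x` decrease, and compactness of `K`
gives a limit point `y` of the orbit with `‖K y‖ = ‖y‖`; hence `y = 0` and `Kⁿ x → 0`. Covering the
relatively compact image of the unit ball by the increasing open sets `{y | ‖Kⁿ y‖ < 1/2}` makes
this uniform: `‖K^N‖ < 1` for some `N`. So the Neumann series `∑ Kⁿ` converges absolutely and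
inverts `1 - K = AΛ`.
-/

open Filter Topology

theorem summable_norm_pow_of_norm_pow_lt_one {R : Type*} [NormedRing R] {x : R} {N : ℕ}
    (hN : N ≠ 0) (h : ‖x ^ N‖ < 1) : Summable fun n ↦ ‖x ^ n‖ := by
  have : NeZero N := ⟨hN⟩
  rw [← (Nat.divModEquiv N).symm.summable_iff]
  convert (summable_norm_geometric_of_norm_lt_one h).mul_norm
    (Summable.of_finite (f := fun r : Fin N ↦ ‖x ^ (r : ℕ)‖)) using 2 with p
  simp [Nat.divModEquiv, pow_add, pow_mul']

section CompactStrictContraction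

variable {𝕜 E : Type*} [RCLike 𝕜] [NormedAddCommGroup E] [NormedSpace 𝕜 E] {K : E →L[𝕜] E}

theorem ContinuousLinearMap.opNorm_le_one_of_norm_apply_lt (hK : ∀ x, x ≠ 0 → ‖K x‖ < ‖x‖) :
    ‖K‖ ≤ 1 :=
  K.opNorm_le_bound zero_le_one fun x ↦ by
    rcases eq_or_ne x 0 with rfl | hx
    · simp
    · simpa using (hK x hx).le

theorem antitone_norm_pow_apply (hK : ‖K‖ ≤ 1) (x : E) : Antitone fun n ↦ ‖(K ^ n) x‖ :=
  antitone_nat_of_succ_le fun n ↦ by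
    rw [pow_succ', mul_apply_eq_comp]
    simpa using K.le_of_opNorm_le hK ((K ^ n) x)

theorem tendsto_pow_apply_nhds_zero_of_isCompactOperator (hcpt : IsCompactOperator K)
    (hK : ∀ x, x ≠ 0 → ‖K x‖ < ‖x‖) (x : E) : Tendsto (fun n ↦ (K ^ n) x) atTop (𝓝 0) := by
  have hK1 := K.opNorm_le_one_of_norm_apply_lt hK
  obtain ⟨c, hc⟩ : ∃ c, Tendsto (fun n ↦ ‖(K ^ n) x‖) atTop (𝓝 c) :=
    ⟨_, tendsto_atTop_ciInf (antitone_norm_pow_apply hK1 x) ⟨0, by rintro _ ⟨n, rfl⟩; positivity⟩⟩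
  obtain ⟨C, hC, hKC⟩ := hcpt.image_closedBall_subset_compact (f := (K : E →ₗ[𝕜] E)) ‖x‖
  have hmem : ∀ n, (K ^ (n + 1)) x ∈ C := fun n ↦ hKC
    ⟨(K ^ n) x, by simpa using antitone_norm_pow_apply hK1 x (Nat.zero_le n), by
      rw [pow_succ', mul_apply_eq_comp]; rfl⟩
  obtain ⟨y, -, φ, hφ, hy⟩ := hC.tendsto_subseq hmem
  have hsub : ∀ k, Tendsto (fun j ↦ ‖(K ^ (φ j + k)) x‖) atTop (𝓝 c) := fun k ↦
    hc.comp (tendsto_atTop_mono (fun j ↦ Nat.le_add_right _ _) hφ.tendsto_atTop)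
  have hy_norm : ‖y‖ = c := tendsto_nhds_unique hy.norm (hsub 1)
  have hKy_norm : ‖K y‖ = c := by
    refine tendsto_nhds_unique ((K.continuous.tendsto y).comp hy).norm ?_
    simpa only [Function.comp_def, ← mul_apply_eq_comp, ← pow_succ'] using hsub 2
  have hy : y = 0 := by
    by_contra h
    exact (hK y h).ne (hKy_norm.trans hy_norm.symm)
  rw [tendsto_zero_iff_norm_tendsto_zero]
  rwa [← hy_norm, hy, norm_zero] at hc

theorem exists_norm_pow_lt_one_of_isCompactOperator (hcpt : IsCompactOperator K)
    (hK : ∀ x, x ≠ 0 → ‖K x‖ < ‖x‖) : ∃ N, N ≠ 0 ∧ ‖K ^ N‖ < 1 := by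
  have hK1 := K.opNorm_le_one_of_norm_apply_lt hK
  obtain ⟨C, hC, hKC⟩ := hcpt.image_closedBall_subset_compact (f := (K : E →ₗ[𝕜] E)) 1
  have hcover : C ⊆ ⋃ n, {y | ‖(K ^ n) y‖ < 2⁻¹} := fun y _ ↦ by
    have hy := tendsto_zero_iff_norm_tendsto_zero.1
      (tendsto_pow_apply_nhds_zero_of_isCompactOperator hcpt hK y)
    exact Set.mem_iUnion.2 (hy.eventually (gt_mem_nhds (by norm_num))).exists
  obtain ⟨n, hn⟩ := hC.elim_directed_cover _
    (fun n ↦ isOpen_lt (by fun_prop) continuous_const) hcover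
    (Monotone.directed_le fun m n hmn y hy ↦ (antitone_norm_pow_apply hK1 y hmn).trans_lt hy)
  refine ⟨n + 1, n.succ_ne_zero, ((K ^ (n + 1)).opNorm_le_of_unit_norm (C := 2⁻¹) (by norm_num)
    fun x hx ↦ ?_).trans_lt (by norm_num)⟩
  rw [pow_succ, mul_apply_eq_comp]
  exact (hn (hKC ⟨x, by simp [hx], rfl⟩)).le

theorem summable_pow_of_isCompactOperator [CompleteSpace E] (hcpt : IsCompactOperator K)
    (hK : ∀ x, x ≠ 0 → ‖K x‖ < ‖x‖) : Summable fun n ↦ K ^ n :=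
  let ⟨_, hN, hKN⟩ := exists_norm_pow_lt_one_of_isCompactOperator hcpt hK
  .of_norm (summable_norm_pow_of_norm_pow_lt_one hN hKN)

end CompactStrictContraction

/-- If `A, Λ` are bounded operators on a Hilbert space with `AΛ = I − K`,
`K` compact and `‖Kf‖ < ‖f‖` for all nonzero `f`, then every `f` satisfies the Neumann
series reconstruction `f = Σ_{m=0}^∞ Kᵐ (AΛf)`, convergent in `H`. -/
theorem stmt10 {H : Type*} [NormedAddCommGroup H] [InnerProductSpace ℝ H] [CompleteSpace H]
    (A Lam K : H →L[ℝ] H) (hAL : A.comp Lam = 1 - K)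
    (hcpt : IsCompactOperator K)
    (hdec : ∀ f : H, f ≠ 0 → ‖K f‖ < ‖f‖) :
    ∀ f : H, HasSum (fun m : ℕ => (K ^ m) (A (Lam f))) f := by
  intro f
  have hsum := summable_pow_of_isCompactOperator hcpt hdec
  have hf : (∑' n, K ^ n) (A (Lam f)) = f := by
    rw [← ContinuousLinearMap.comp_apply A Lam, hAL, ← mul_apply_eq_comp,
      hsum.tsum_pow_mul_one_sub, one_apply_eq_self]
  simpa [hf] using hsum.hasSum.mapL (ContinuousLinearMap.apply ℝ H (A (Lam f)))
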